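/- There exists a single-peaked preference profile over 4 candidates (3 voters with a ≻ b ≻ c ≻ d and 2 voters with c ≻ d ≻ b ≻ a, single-peaked on the axis a ▷ b ▷ c ▷ d) such that no ranking of the candidates in non-increasing order of Borda score is single-peaked with respect to that axis: the Borda scores are B(a)=9, B(b)=8, B(c)=9, B(d)=4, and both resulting rankings (c ≻ a ≻ b ≻ d and a ≻ c ≻ b ≻ d) violate single-peakedness. -/

import Mathlib

open Finset

/-- A ranking over `m` candidates: `r c` is the position of candidate `c`
(position `0` = most preferred). -/
abbrev Ranking (m : ℕ) := Equiv.Perm (Fin m)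

/-- Voter with ranking `r` prefers `a` to `b`. -/
def Prefers {m : ℕ} (r : Ranking m) (a b : Fin m) : Prop := r a < r b

/-- A ranking is single-peaked w.r.t. the axis `c_0 ▷ c_1 ▷ ... ▷ c_{m-1}`. -/
def IsSinglePeaked {m : ℕ} (r : Ranking m) : Prop :=
  ∀ i j k : Fin m, i < j → j < k →
    (Prefers r i j → Prefers r j k) ∧ (Prefers r k j → Prefers r j i)

/-- A profile is single-peaked if all its rankings are. -/
def SPProfile {V : Type*} {m : ℕ} (P : V → Ranking m) : Prop :=
  ∀ v, IsSinglePeaked (P v)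

/-- Popularity margin of `a` over `b`. -/
noncomputable def pop {V : Type*} [Fintype V] {m : ℕ} (P : V → Ranking m)
    (a b : Fin m) : ℤ :=
  (Nat.card {v : V // Prefers (P v) a b} : ℤ) -
    (Nat.card {v : V // Prefers (P v) b a} : ℤ)

/-- Minimax Condorcet score of candidate `c`: worst defeat margin. -/
noncomputable def mmc {V : Type*} [Fintype V] {m : ℕ} (P : V → Ranking m)
    (c : Fin m) : WithBot ℤ :=
  (Finset.univ.erase c).sup (fun c' => ((pop P c' c : ℤ) : WithBot ℤ))

/-- Kendall's tau distance between two rankings. -/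
noncomputable def kt {m : ℕ} (r s : Ranking m) : ℕ :=
  Nat.card {p : Fin m × Fin m //
    p.1 < p.2 ∧ ¬ (Prefers r p.1 p.2 ↔ Prefers s p.1 p.2)}

/-- Kemeny score of ranking `r` w.r.t. profile `P`. -/
noncomputable def ktSum {V : Type*} [Fintype V] {m : ℕ} (r : Ranking m)
    (P : V → Ranking m) : ℕ :=
  ∑ v, kt r (P v)

/-- The peak (top candidate) of a ranking. -/
def peak {m : ℕ} (r : Ranking (m + 1)) : Fin (m + 1) := r.symm 0

/-- Borda score: sum over voters of the number of candidates ranked below. -/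
noncomputable def borda {V : Type*} [Fintype V] {m : ℕ} (P : V → Ranking m)
    (x : Fin m) : ℕ :=
  ∑ v, (m - 1 - ((P v) x : ℕ))

/-- The ranking c ≻ d ≻ b ≻ a over candidates a = 0, b = 1, c = 2, d = 3. -/
def cdba : Ranking 4 := ⟨![3, 2, 0, 1], ![2, 3, 1, 0], by decide, by decide⟩

/-- The profile of three voters with a ≻ b ≻ c ≻ d and two voters with
c ≻ d ≻ b ≻ a. -/
def P19 : Fin 5 → Ranking 4 :=
  ![Equiv.refl (Fin 4), Equiv.refl (Fin 4), Equiv.refl (Fin 4), cdba, cdba]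

theorem isSinglePeaked_refl (m : ℕ) : IsSinglePeaked (Equiv.refl (Fin m)) :=
  fun _ _ _ _ hjk => ⟨fun _ => hjk, fun hkj => absurd hkj (lt_asymm hjk)⟩

theorem isSinglePeaked_cdba : IsSinglePeaked cdba := by
  unfold IsSinglePeaked Prefers
  decide

theorem spProfile_P19 : SPProfile P19 := by
  intro v
  fin_cases v <;> first | exact isSinglePeaked_refl 4 | exact isSinglePeaked_cdba

theorem borda_P19 :
    borda P19 0 = 9 ∧ borda P19 1 = 8 ∧ borda P19 2 = 9 ∧ borda P19 3 = 4 := by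
  unfold borda
  decide

theorem IsSinglePeaked.not_lt_of_lt {m : ℕ} {r : Ranking m} (hr : IsSinglePeaked r)
    {i j k : Fin m} (hij : i < j) (hjk : j < k) (hi : r i < r j) : ¬ r k < r j :=
  fun hk => lt_asymm hi ((hr i j k hij hjk).2 hk)

theorem lt_of_score_lt {α β γ : Type*} [LinearOrder β] [LinearOrder γ] {r : α → β} {s : α → γ}
    (hrs : ∀ a b, r a ≤ r b → s b ≤ s a) {a b : α} (h : s b < s a) : r a < r b :=
  lt_of_not_ge fun hba => (hrs b a hba).not_gt h

/-- this profile is single-peaked on the axis a ▷ b ▷ c ▷ d, has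
Borda scores 9, 8, 9, 4, and no ranking of the candidates in non-increasing
order of Borda score is single-peaked w.r.t. the axis. -/
theorem stmt_19 :
    SPProfile P19 ∧
    borda P19 0 = 9 ∧ borda P19 1 = 8 ∧ borda P19 2 = 9 ∧ borda P19 3 = 4 ∧
    ∀ r : Ranking 4,
      (∀ a b : Fin 4, r a ≤ r b → borda P19 b ≤ borda P19 a) →
      ¬ IsSinglePeaked r := by
  obtain ⟨h0, h1, h2, h3⟩ := borda_P19
  refine ⟨spProfile_P19, h0, h1, h2, h3, fun r hr hsp => ?_⟩
  have hab : r 0 < r 1 := lt_of_score_lt hr (by omega)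
  have hcb : r 2 < r 1 := lt_of_score_lt hr (by omega)
  exact hsp.not_lt_of_lt (by decide) (by decide) hab hcb
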